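/- Let n ≥ 2 and f(k) = n^k − 1. Then for every d ≥ 1 and μ ≥ 0, 𝒩(d,μ,f) = (n−1)^d · Σ_{k=0}^{μ} C(d+k−1, k) · C(d+μ−k−1, μ−k) · n^k. -/

import Mathlib

/-- Multi-indices `i : Fin d → ℕ` with `i k ≥ 1` for all `k` and `∑ k, i k = d + μ`. -/
def smolyakIndices (d μ : ℕ) : Finset (Fin d → ℕ) :=
  (Fintype.piFinset fun _ => Finset.Icc 1 (d + μ)).filter fun i => ∑ k, i k = d + μ

/-- `𝒩(d, μ, f) = ∑_{|i| = d + μ, i ≥ 1} ∏ₖ f(iₖ)`. -/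
def calN (f : ℕ → ℕ) (d μ : ℕ) : ℕ :=
  ∑ i ∈ smolyakIndices d μ, ∏ k, f (i k)

/-!
Since `n ^ (m + 1) - 1 = (n - 1) * ∑_{j ≤ m} n ^ j`, shifting `i = a + 1` and expanding the product
writes `𝒩` as `(n - 1) ^ d` times the sum of `n ^ |j|` over pairs of tuples `j ≤ a` with `|a| = μ`.
Writing `a = j + l`, these pairs are the pairs `(j, l)` with `|j| = k`, `|l| = μ - k`, and stars and
bars counts each kind: `C(d + k - 1, k)` and `C(d + μ - k - 1, μ - k)`.
-/

open Finset Finset.Nat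

theorem Nat.pow_sub_one_eq_sub_one_mul_geom_sum (n m : ℕ) :
    n ^ m - 1 = (n - 1) * ∑ j ∈ range m, n ^ j := by
  rcases n with _ | n
  · rcases m with _ | m <;> simp
  · rw [add_tsub_cancel_right, mul_comm, ← geom_sum_mul_add n m, add_tsub_cancel_right]

theorem prod_pow_sub_one_eq_sub_one_pow_mul_sum {d : ℕ} (n : ℕ) (a : Fin d → ℕ) :
    ∏ k, (n ^ a k - 1) =
      (n - 1) ^ d * ∑ j ∈ Fintype.piFinset fun k => range (a k), n ^ ∑ k, j k := by
  simp_rw [Nat.pow_sub_one_eq_sub_one_mul_geom_sum, prod_mul_distrib, prod_const, card_univ,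
    Fintype.card_fin, prod_univ_sum, prod_pow_eq_pow_sum]

theorem Finset.Nat.card_antidiagonalTuple (d m : ℕ) :
    #(antidiagonalTuple d m) = (d + m - 1).choose m := by
  rw [card_eq_of_equiv_fintype ((Equiv.subtypeEquivRight fun _ => mem_antidiagonalTuple).trans
    (Sym.equivNatSumOfFintype _ _).symm), Sym.card_sym_eq_choose, Fintype.card_fin]

theorem Finset.Nat.sum_antidiagonalTuple_sum_le {M : Type*} [AddCommMonoid M] (d μ : ℕ)
    (g : (Fin d → ℕ) → M) :
    ∑ a ∈ antidiagonalTuple d μ, ∑ j ∈ Fintype.piFinset (fun k => range (a k + 1)), g j =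
      ∑ p ∈ antidiagonal μ, ∑ j ∈ antidiagonalTuple d p.1, ∑ _l ∈ antidiagonalTuple d p.2, g j := by
  simp_rw [← sum_product' (antidiagonalTuple d _), sum_sigma']
  refine sum_nbij' (fun x => ⟨(∑ k, x.2 k, μ - ∑ k, x.2 k), (x.2, x.1 - x.2)⟩)
    (fun y => ⟨y.2.1 + y.2.2, y.2.1⟩) ?_ ?_ ?_ ?_ fun _ _ => rfl
  · rintro ⟨a, j⟩ h
    simp only [mem_sigma, mem_antidiagonalTuple, Fintype.mem_piFinset, mem_range,
      Nat.lt_succ_iff, mem_product, HasAntidiagonal.mem_antidiagonal] at h ⊢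
    have hle : ∑ k, j k ≤ μ := h.1 ▸ sum_le_sum fun k _ => h.2 k
    refine ⟨by omega, trivial, ?_⟩
    rw [← h.1]
    exact sum_tsub_distrib _ fun k _ => h.2 k
  · rintro ⟨⟨p, q⟩, j, l⟩ h
    simp only [mem_sigma, mem_antidiagonalTuple, Fintype.mem_piFinset, mem_range,
      Nat.lt_succ_iff, mem_product, HasAntidiagonal.mem_antidiagonal] at h ⊢
    refine ⟨?_, fun k => Nat.le_add_right _ _⟩
    rw [Pi.add_def, sum_add_distrib, h.2.1, h.2.2, h.1]
  · rintro ⟨a, j⟩ h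
    simp only [mem_sigma, Fintype.mem_piFinset, mem_range, Nat.lt_succ_iff] at h
    rw [add_tsub_cancel_of_le fun k => h.2 k]
  · rintro ⟨⟨p, q⟩, j, l⟩ h
    simp only [mem_sigma, mem_antidiagonalTuple, mem_product, HasAntidiagonal.mem_antidiagonal] at h
    simp only [add_tsub_cancel_left, h.2.1, ← h.1]

theorem mem_smolyakIndices {d μ : ℕ} {i : Fin d → ℕ} :
    i ∈ smolyakIndices d μ ↔ (∀ k, 1 ≤ i k) ∧ ∑ k, i k = d + μ := by
  simp only [smolyakIndices, mem_filter, Fintype.mem_piFinset, mem_Icc]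
  refine ⟨fun h => ⟨fun k => (h.1 k).1, h.2⟩, fun h => ⟨fun k => ⟨h.1 k, ?_⟩, h.2⟩⟩
  rw [← h.2]
  exact single_le_sum (fun _ _ => Nat.zero_le _) (mem_univ k)

theorem calN_eq_sum_antidiagonalTuple (f : ℕ → ℕ) (d μ : ℕ) :
    calN f d μ = ∑ a ∈ antidiagonalTuple d μ, ∏ k, f (a k + 1) := by
  refine sum_nbij' (fun i => i - 1) (fun a => a + 1) ?_ ?_ ?_ ?_ fun i hi => ?_
  · intro i hi
    rw [mem_smolyakIndices] at hi
    simp only [mem_antidiagonalTuple, Pi.sub_apply, Pi.one_apply]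
    rw [sum_tsub_distrib _ fun k _ => hi.1 k, hi.2]
    simp
  · intro a ha
    rw [mem_antidiagonalTuple] at ha
    rw [mem_smolyakIndices]
    refine ⟨fun k => Nat.le_add_left _ _, ?_⟩
    simp [sum_add_distrib, ha, add_comm]
  · intro i hi
    exact tsub_add_cancel_of_le (mem_smolyakIndices.1 hi).1
  · intro a _
    exact add_tsub_cancel_right a 1
  · simp only [Pi.sub_apply, Pi.one_apply, tsub_add_cancel_of_le ((mem_smolyakIndices.1 hi).1 _)]

theorem calN_of_pow_sub_one_general (n : ℕ) (d μ : ℕ) :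
    calN (fun k => n ^ k - 1) d μ =
      (n - 1) ^ d * ∑ k ∈ Finset.range (μ + 1),
        (d + k - 1).choose k * (d + μ - k - 1).choose (μ - k) * n ^ k := by
  have fiber (p : ℕ × ℕ) : ∑ j ∈ antidiagonalTuple d p.1, ∑ _l ∈ antidiagonalTuple d p.2,
      n ^ ∑ k, j k = #(antidiagonalTuple d p.1) * #(antidiagonalTuple d p.2) * n ^ p.1 := by
    rw [sum_congr rfl fun j hj => by rw [mem_antidiagonalTuple.1 hj]]
    simp only [sum_const, smul_eq_mul, mul_assoc]
  calc calN (fun k => n ^ k - 1) d μ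
      = ∑ a ∈ antidiagonalTuple d μ, (n - 1) ^ d *
          ∑ j ∈ Fintype.piFinset fun k => range (a k + 1), n ^ ∑ k, j k := by
        simp only [calN_eq_sum_antidiagonalTuple, ← prod_pow_sub_one_eq_sub_one_pow_mul_sum]
    _ = (n - 1) ^ d * ∑ p ∈ antidiagonal μ,
          #(antidiagonalTuple d p.1) * #(antidiagonalTuple d p.2) * n ^ p.1 := by
        rw [← mul_sum, sum_antidiagonalTuple_sum_le, sum_congr rfl fun p _ => fiber p]
    _ = _ := by
        rw [Nat.sum_antidiagonal_eq_sum_range_succ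
          (fun i j => #(antidiagonalTuple d i) * #(antidiagonalTuple d j) * n ^ i)]
        refine congrArg _ (sum_congr rfl fun k hk => ?_)
        rw [card_antidiagonalTuple, card_antidiagonalTuple,
          ← Nat.add_sub_assoc (Nat.lt_succ_iff.1 (mem_range.1 hk))]

/-- For `f(k) = nᵏ - 1` (with `n ≥ 2`),
`𝒩(d, μ, f) = (n-1)^d · ∑_{k=0}^{μ} C(d+k-1, k) C(d+μ-k-1, μ-k) nᵏ`. -/
theorem calN_of_pow_sub_one (n : ℕ) (hn : 2 ≤ n) (d μ : ℕ) (hd : 1 ≤ d) :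
    calN (fun k => n ^ k - 1) d μ =
      (n - 1) ^ d * ∑ k ∈ Finset.range (μ + 1),
        (d + k - 1).choose k * (d + μ - k - 1).choose (μ - k) * n ^ k :=
  calN_of_pow_sub_one_general n d μ
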